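/- Let G be a complex m×n matrix with ‖G v‖ ≥ γ₀ ‖v‖ for all v (γ₀ > 0), set A = Gᴴ G, K = A⁻¹ Gᴴ, P = G A⁻¹ Gᴴ, and fix η with 0 < η < γ₀ and 2(1 − η) − η/γ₀² > 0. Let b ∈ ℂⁿ, w(t) = exp(t M)(b, 0) with blocks (r(t), s(t)), and define E(t) = ‖r(t)‖² + ‖s(t)‖² − 2η Re⟨r(t), K s(t)⟩. Then E is differentiable at every t and its derivative satisfies E′(t) ≤ −η ‖r(t)‖² − (2(1 − η) − η/γ₀²) ‖P s(t)‖² − 2 ‖s(t) − P s(t)‖². -/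

import Mathlib

open scoped Matrix ComplexInnerProductSpace
open Filter MeasureTheory

noncomputable section

/-- `ℂ^k` with the ℓ² norm. -/
abbrev Evec (k : ℕ) : Type := EuclideanSpace ℂ (Fin k)

/-- The joint space `ℂⁿ ⊕ ℂᵐ` with the ℓ² norm. -/
abbrev Jvec (n m : ℕ) : Type := EuclideanSpace ℂ (Fin n ⊕ Fin m)

/-- A complex matrix viewed as a continuous linear map between Euclidean spaces,
so that `‖matCLM A‖` is the induced ℓ² operator norm. -/
noncomputable def matCLM {α β : Type*} [Fintype α] [Fintype β] [DecidableEq β]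
    (A : Matrix α β ℂ) : EuclideanSpace ℂ β →L[ℂ] EuclideanSpace ℂ α :=
  LinearMap.toContinuousLinearMap (Matrix.toEuclideanLin A)

/-- The block matrix `M = [[0, -Gᴴ], [G, -I]]` on `ℂⁿ ⊕ ℂᵐ`. -/
def blockM {m n : ℕ} (G : Matrix (Fin m) (Fin n) ℂ) :
    Matrix (Fin n ⊕ Fin m) (Fin n ⊕ Fin m) ℂ :=
  Matrix.fromBlocks 0 (-Gᴴ) G (-1)

/-- The matrix exponential `exp (t M)` as a continuous linear map on `ℂⁿ ⊕ ℂᵐ`. -/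
noncomputable def expM {m n : ℕ} (G : Matrix (Fin m) (Fin n) ℂ) (t : ℝ) :
    Jvec n m →L[ℂ] Jvec n m :=
  NormedSpace.exp (t • matCLM (blockM G))

/-- Join two blocks into a joint vector. -/
def joinV {n m : ℕ} (r : Evec n) (s : Evec m) : Jvec n m :=
  (WithLp.equiv 2 _).symm (Sum.elim ((WithLp.equiv 2 _) r) ((WithLp.equiv 2 _) s))

/-- First (residual `r`) block of a joint vector. -/
def rblock {n m : ℕ} (w : Jvec n m) : Evec n :=
  (WithLp.equiv 2 _).symm fun i => w (Sum.inl i)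

/-- Second (residual `s`) block of a joint vector. -/
def sblock {n m : ℕ} (w : Jvec n m) : Evec m :=
  (WithLp.equiv 2 _).symm fun j => w (Sum.inr j)

/-- Residual dynamics `w(t) = exp (t M) (b, 0)`. -/
noncomputable def wdyn {m n : ℕ} (G : Matrix (Fin m) (Fin n) ℂ) (b : Evec n) (t : ℝ) :
    Jvec n m :=
  expM G t (joinV b 0)

/-- Accumulator `x(t) = ∫₀ᵗ r(τ) dτ`. -/
noncomputable def xacc {m n : ℕ} (G : Matrix (Fin m) (Fin n) ℂ) (b : Evec n) (t : ℝ) :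
    Evec n :=
  ∫ τ in (0:ℝ)..t, rblock (wdyn G b τ)


/-!
Along the flow `r' = -Gᴴ s`, `s' = G r - s` the energy `‖r‖² + ‖s‖²` decreases at rate
`2‖s‖²`, while the cross term, by `K G = 1` and `G K = P`, contributes
`-2η (‖r‖² - Re⟨r, K s⟩ - ‖P s‖²)`. The indefinite part `Re⟨r, K s⟩` is absorbed by Young's
inequality together with `γ₀ ‖K s‖ ≤ ‖G K s‖ = ‖P s‖`, and `‖s‖² = ‖P s‖² + ‖s - P s‖²` because
`P` is an orthogonal projector.
-/

section MatCLM

variable {α β γ : Type*} [Fintype α] [Fintype β] [Fintype γ] [DecidableEq β] [DecidableEq γ]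

lemma matCLM_apply (A : Matrix α β ℂ) (v : EuclideanSpace ℂ β) :
    matCLM A v = WithLp.toLp 2 (A *ᵥ v.ofLp) :=
  rfl

lemma matCLM_mul (A : Matrix α β ℂ) (B : Matrix β γ ℂ) (v : EuclideanSpace ℂ γ) :
    matCLM (A * B) v = matCLM A (matCLM B v) := by
  simp [matCLM_apply, Matrix.mulVec_mulVec]

lemma matCLM_one (v : EuclideanSpace ℂ β) : matCLM (1 : Matrix β β ℂ) v = v := by
  simp [matCLM_apply]

lemma inner_matCLM_left [DecidableEq α] (A : Matrix α β ℂ) (u : EuclideanSpace ℂ β)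
    (v : EuclideanSpace ℂ α) : ⟪matCLM A u, v⟫ = ⟪u, matCLM Aᴴ v⟫ := by
  change ⟪Matrix.toEuclideanLin A u, v⟫ = ⟪u, Matrix.toEuclideanLin Aᴴ v⟫
  rw [Matrix.toEuclideanLin_conjTranspose_eq_adjoint, LinearMap.adjoint_inner_right]

end MatCLM

section Projector

variable {ι : Type*} [Fintype ι] [DecidableEq ι] {P : Matrix ι ι ℂ}

lemma re_inner_matCLM_eq_norm_sq (hP : P.IsHermitian) (hPP : IsIdempotentElem P)
    (s : EuclideanSpace ℂ ι) : (⟪s, matCLM P s⟫).re = ‖matCLM P s‖ ^ 2 := by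
  have hself : ⟪matCLM P s, matCLM P s⟫ = ⟪s, matCLM P s⟫ := by
    rw [inner_matCLM_left, hP.eq, ← matCLM_mul, hPP.eq]
  rw [← hself, ← RCLike.re_to_complex, inner_self_eq_norm_sq]

lemma norm_sub_matCLM_sq (hP : P.IsHermitian) (hPP : IsIdempotentElem P)
    (s : EuclideanSpace ℂ ι) : ‖s - matCLM P s‖ ^ 2 = ‖s‖ ^ 2 - ‖matCLM P s‖ ^ 2 := by
  rw [norm_sub_sq (𝕜 := ℂ), RCLike.re_to_complex, re_inner_matCLM_eq_norm_sq hP hPP]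
  ring

end Projector

section LeastSquares

variable {α β : Type*} [Fintype α] [Fintype β] [DecidableEq β] (G : Matrix α β ℂ)

lemma mulVec_injective_of_lower_bound {γ₀ : ℝ} (hγ : 0 < γ₀)
    (hG : ∀ v, γ₀ * ‖v‖ ≤ ‖matCLM G v‖) : Function.Injective G.mulVec := by
  intro x y hxy
  have h := hG (WithLp.toLp 2 (x - y))
  rw [matCLM_apply, WithLp.ofLp_toLp, Matrix.mulVec_sub, hxy, sub_self, WithLp.toLp_zero,
    norm_zero] at h
  have hxy0 : ‖WithLp.toLp 2 (x - y)‖ ≤ 0 := le_of_mul_le_mul_left (by simpa using h) hγ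
  simpa [sub_eq_zero] using hxy0

open scoped ComplexOrder in
lemma isUnit_conjTranspose_mul_self (hG : Function.Injective G.mulVec) : IsUnit (Gᴴ * G) :=
  (Matrix.PosDef.conjTranspose_mul_self G hG).isUnit

lemma inv_conjTranspose_mul_self_mul_conjTranspose_mul_self (h : IsUnit (Gᴴ * G)) :
    (Gᴴ * G)⁻¹ * Gᴴ * G = 1 := by
  rw [Matrix.mul_assoc, Matrix.nonsing_inv_mul _ ((Matrix.isUnit_iff_isUnit_det _).mp h)]

lemma isHermitian_mul_inv_conjTranspose_mul_self_mul :
    (G * (Gᴴ * G)⁻¹ * Gᴴ).IsHermitian :=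
  Matrix.isHermitian_mul_mul_conjTranspose G (Matrix.isHermitian_conjTranspose_mul_self G).inv

lemma isIdempotentElem_mul_inv_conjTranspose_mul_self_mul (h : IsUnit (Gᴴ * G)) :
    IsIdempotentElem (G * (Gᴴ * G)⁻¹ * Gᴴ) := by
  calc G * (Gᴴ * G)⁻¹ * Gᴴ * (G * (Gᴴ * G)⁻¹ * Gᴴ)
      = G * ((Gᴴ * G)⁻¹ * Gᴴ * G) * (Gᴴ * G)⁻¹ * Gᴴ := by simp only [Matrix.mul_assoc]
    _ = G * (Gᴴ * G)⁻¹ * Gᴴ := by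
      rw [inv_conjTranspose_mul_self_mul_conjTranspose_mul_self G h, Matrix.mul_one]

end LeastSquares

section Dynamics

variable {m n : ℕ} (G : Matrix (Fin m) (Fin n) ℂ)

def rblockCLM : Jvec n m →L[ℂ] Evec n :=
  LinearMap.toContinuousLinearMap
    { toFun := rblock, map_add' := fun _ _ => rfl, map_smul' := fun _ _ => rfl }

def sblockCLM : Jvec n m →L[ℂ] Evec m :=
  LinearMap.toContinuousLinearMap
    { toFun := sblock, map_add' := fun _ _ => rfl, map_smul' := fun _ _ => rfl }

lemma rblock_matCLM_blockM (w : Jvec n m) :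
    rblock (matCLM (blockM G) w) = -matCLM Gᴴ (sblock w) := by
  ext i
  simp [rblock, sblock, blockM, matCLM_apply, Matrix.mulVec, dotProduct, Fintype.sum_sum_type]

lemma sblock_matCLM_blockM (w : Jvec n m) :
    sblock (matCLM (blockM G) w) = matCLM G (rblock w) - sblock w := by
  ext j
  simp [rblock, sblock, blockM, matCLM_apply, Matrix.mulVec, dotProduct, Fintype.sum_sum_type,
    Matrix.one_apply, sub_eq_add_neg]

lemma hasDerivAt_wdyn (b : Evec n) (t : ℝ) :
    HasDerivAt (wdyn G b) (matCLM (blockM G) (wdyn G b t)) t := by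
  have hexp : HasDerivAt (expM G) (matCLM (blockM G) * expM G t) t :=
    hasDerivAt_exp_smul_const' (𝕂 := ℝ) (matCLM (blockM G)) t
  exact ((ContinuousLinearMap.apply ℂ _ (joinV b 0)).restrictScalars ℝ).hasFDerivAt.comp_hasDerivAt
    t hexp

lemma hasDerivAt_rblock_wdyn (b : Evec n) (t : ℝ) :
    HasDerivAt (fun τ => rblock (wdyn G b τ)) (-matCLM Gᴴ (sblock (wdyn G b t))) t := by
  rw [← rblock_matCLM_blockM]
  exact (rblockCLM.restrictScalars ℝ).hasFDerivAt.comp_hasDerivAt t (hasDerivAt_wdyn G b t)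

lemma hasDerivAt_sblock_wdyn (b : Evec n) (t : ℝ) :
    HasDerivAt (fun τ => sblock (wdyn G b τ))
      (matCLM G (rblock (wdyn G b t)) - sblock (wdyn G b t)) t := by
  rw [← sblock_matCLM_blockM]
  exact (sblockCLM.restrictScalars ℝ).hasFDerivAt.comp_hasDerivAt t (hasDerivAt_wdyn G b t)

end Dynamics

section Lyapunov

variable {E F : Type*} [NormedAddCommGroup E] [InnerProductSpace ℂ E]
  [NormedAddCommGroup F] [InnerProductSpace ℂ F]

def lyapunovFn (η : ℝ) (K : F →L[ℂ] E) (r : E) (s : F) : ℝ :=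
  ‖r‖ ^ 2 + ‖s‖ ^ 2 - 2 * η * (⟪r, K s⟫).re

theorem HasDerivAt.lyapunovFn (η : ℝ) (K : F →L[ℂ] E) {r : ℝ → E} {s : ℝ → F} {r' : E} {s' : F}
    {t : ℝ} (hr : HasDerivAt r r' t) (hs : HasDerivAt s s' t) :
    HasDerivAt (fun τ => lyapunovFn η K (r τ) (s τ))
      (2 * (⟪r t, r'⟫).re + 2 * (⟪s t, s'⟫).re
        - 2 * η * ((⟪r t, K s'⟫).re + (⟪r', K (s t)⟫).re)) t := by
  -- the calculus lemmas are stated for the real inner product, which is `Re ⟪·, ·⟫` by definition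
  let := InnerProductSpace.rclikeToReal ℂ E
  let := InnerProductSpace.rclikeToReal ℂ F
  have hKs := (K.restrictScalars ℝ).hasFDerivAt.comp_hasDerivAt t hs
  exact (hr.norm_sq.add hs.norm_sq).sub ((hr.inner ℝ hKs).const_mul (2 * η))

end Lyapunov

section LyapunovDerivative

variable {α β : Type*} [Fintype α] [Fintype β] [DecidableEq α] [DecidableEq β] (G : Matrix α β ℂ)

lemma lyapunovFn_deriv_eq (h : IsUnit (Gᴴ * G)) (η : ℝ) (r : EuclideanSpace ℂ β)
    (s : EuclideanSpace ℂ α) :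
    2 * (⟪r, -matCLM Gᴴ s⟫).re + 2 * (⟪s, matCLM G r - s⟫).re
      - 2 * η * ((⟪r, matCLM ((Gᴴ * G)⁻¹ * Gᴴ) (matCLM G r - s)⟫).re
        + (⟪-matCLM Gᴴ s, matCLM ((Gᴴ * G)⁻¹ * Gᴴ) s⟫).re)
    = -2 * ‖s‖ ^ 2 - 2 * η * (‖r‖ ^ 2 - (⟪r, matCLM ((Gᴴ * G)⁻¹ * Gᴴ) s⟫).re
        - ‖matCLM (G * (Gᴴ * G)⁻¹ * Gᴴ) s‖ ^ 2) := by
  have hKG : matCLM ((Gᴴ * G)⁻¹ * Gᴴ) (matCLM G r) = r := by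
    rw [← matCLM_mul, inv_conjTranspose_mul_self_mul_conjTranspose_mul_self G h, matCLM_one]
  have hGK :
      ⟪matCLM Gᴴ s, matCLM ((Gᴴ * G)⁻¹ * Gᴴ) s⟫ = ⟪s, matCLM (G * (Gᴴ * G)⁻¹ * Gᴴ) s⟫ := by
    rw [inner_matCLM_left, Matrix.conjTranspose_conjTranspose, ← matCLM_mul, Matrix.mul_assoc]
  have hsym : (⟪r, matCLM Gᴴ s⟫).re = (⟪s, matCLM G r⟫).re := by
    rw [← inner_conj_symm, Complex.conj_re, inner_matCLM_left, Matrix.conjTranspose_conjTranspose]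
  have hPs := re_inner_matCLM_eq_norm_sq (isHermitian_mul_inv_conjTranspose_mul_self_mul G)
    (isIdempotentElem_mul_inv_conjTranspose_mul_self_mul G h) s
  have hr2 : (⟪r, r⟫).re = ‖r‖ ^ 2 := inner_self_eq_norm_sq (𝕜 := ℂ) r
  have hs2 : (⟪s, s⟫).re = ‖s‖ ^ 2 := inner_self_eq_norm_sq (𝕜 := ℂ) s
  simp only [map_sub, hKG, inner_neg_left, inner_neg_right, inner_sub_right, hGK, Complex.neg_re,
    Complex.sub_re]
  linear_combination (-2) * hsym - 2 * η * hr2 + 2 * η * hPs - 2 * hs2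

lemma two_mul_re_inner_le_of_lower_bound {γ₀ : ℝ} (hγ : 0 < γ₀)
    (hG : ∀ v, γ₀ * ‖v‖ ≤ ‖matCLM G v‖) (r : EuclideanSpace ℂ β) (s : EuclideanSpace ℂ α) :
    2 * (⟪r, matCLM ((Gᴴ * G)⁻¹ * Gᴴ) s⟫).re
      ≤ ‖r‖ ^ 2 + ‖matCLM (G * (Gᴴ * G)⁻¹ * Gᴴ) s‖ ^ 2 / γ₀ ^ 2 := by
  set k := matCLM ((Gᴴ * G)⁻¹ * Gᴴ) s
  have hk : ‖k‖ ≤ ‖matCLM (G * (Gᴴ * G)⁻¹ * Gᴴ) s‖ / γ₀ := by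
    rw [le_div_iff₀ hγ, mul_comm, Matrix.mul_assoc, matCLM_mul]
    exact hG k
  calc 2 * (⟪r, k⟫).re ≤ 2 * (‖r‖ * ‖k‖) := by
        gcongr
        exact re_inner_le_norm (𝕜 := ℂ) r k
    _ ≤ ‖r‖ ^ 2 + ‖k‖ ^ 2 := by
        rw [← mul_assoc]
        exact two_mul_le_add_sq _ _
    _ ≤ ‖r‖ ^ 2 + ‖matCLM (G * (Gᴴ * G)⁻¹ * Gᴴ) s‖ ^ 2 / γ₀ ^ 2 := by
        rw [← div_pow]
        gcongr

end LyapunovDerivative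

theorem stmt8_lyapunov_derivative_bound_general {m n : ℕ}
    (γ₀ η : ℝ) (hγ : 0 < γ₀) (hη0 : 0 < η)
    (G : Matrix (Fin m) (Fin n) ℂ)
    (hG : ∀ v : Evec n, γ₀ * ‖v‖ ≤ ‖matCLM G v‖) (b : Evec n) :
    ∀ t : ℝ, ∃ d : ℝ,
      HasDerivAt
        (fun τ : ℝ => ‖rblock (wdyn G b τ)‖ ^ 2 + ‖sblock (wdyn G b τ)‖ ^ 2
          - 2 * η * (⟪rblock (wdyn G b τ), matCLM ((Gᴴ * G)⁻¹ * Gᴴ) (sblock (wdyn G b τ))⟫).re) d t ∧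
      d ≤ -η * ‖rblock (wdyn G b t)‖ ^ 2
          - (2 * (1 - η) - η / γ₀ ^ 2) * ‖matCLM (G * (Gᴴ * G)⁻¹ * Gᴴ) (sblock (wdyn G b t))‖ ^ 2
          - 2 * ‖sblock (wdyn G b t) - matCLM (G * (Gᴴ * G)⁻¹ * Gᴴ) (sblock (wdyn G b t))‖ ^ 2 := by
  intro t
  have hA : IsUnit (Gᴴ * G) :=
    isUnit_conjTranspose_mul_self G (mulVec_injective_of_lower_bound G hγ hG)
  refine ⟨_, (hasDerivAt_rblock_wdyn G b t).lyapunovFn η _ (hasDerivAt_sblock_wdyn G b t), ?_⟩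
  set r := rblock (wdyn G b t)
  set s := sblock (wdyn G b t)
  rw [lyapunovFn_deriv_eq G hA,
    norm_sub_matCLM_sq (isHermitian_mul_inv_conjTranspose_mul_self_mul G)
      (isIdempotentElem_mul_inv_conjTranspose_mul_self_mul G hA)]
  have hYoung := mul_le_mul_of_nonneg_left (two_mul_re_inner_le_of_lower_bound G hγ hG r s) hη0.le
  linear_combination hYoung

theorem stmt8_lyapunov_derivative_bound {m n : ℕ} (hm : 0 < m) (hn : 0 < n)
    (γ₀ η : ℝ) (hγ : 0 < γ₀) (hη0 : 0 < η) (hη : η < γ₀)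
    (hη2 : 0 < 2 * (1 - η) - η / γ₀ ^ 2)
    (G : Matrix (Fin m) (Fin n) ℂ)
    (hG : ∀ v : Evec n, γ₀ * ‖v‖ ≤ ‖matCLM G v‖) (b : Evec n) :
    ∀ t : ℝ, ∃ d : ℝ,
      HasDerivAt
        (fun τ : ℝ => ‖rblock (wdyn G b τ)‖ ^ 2 + ‖sblock (wdyn G b τ)‖ ^ 2
          - 2 * η * (⟪rblock (wdyn G b τ), matCLM ((Gᴴ * G)⁻¹ * Gᴴ) (sblock (wdyn G b τ))⟫).re) d t ∧
      d ≤ -η * ‖rblock (wdyn G b t)‖ ^ 2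
          - (2 * (1 - η) - η / γ₀ ^ 2) * ‖matCLM (G * (Gᴴ * G)⁻¹ * Gᴴ) (sblock (wdyn G b t))‖ ^ 2
          - 2 * ‖sblock (wdyn G b t) - matCLM (G * (Gᴴ * G)⁻¹ * Gᴴ) (sblock (wdyn G b t))‖ ^ 2 :=
  stmt8_lyapunov_derivative_bound_general γ₀ η hγ hη0 G hG b
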